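/- arXiv:1606.09496 — 2 statements merged into one kernel-verified Lean document; each statement's English description precedes it below -/
import Mathlib

section
/- For complex numbers $x,y$ and a positive integer $n$ (with no denominator vanishing), $\sum_{k=0}^n(-1)^k\binom{n}{k}\frac{\binom{2x-y+n+k}{k}\binom{y+k}{k}}{\binom{x+k}{k}^2}\,\frac{y}{y+k}\,H_k^{\langle2\rangle}(x)=\frac{\binom{x-y+n}{n}^2}{\binom{x+n}{n}^2}\Big(H_n^{\langle2\rangle}(x)-H_n^{\langle2\rangle}(x-y)\Big)$. -/
/-!
Multiplying the `k`-th summand by `(x + 1)_n ^ 2` turns it into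
`(-1)^k C(n,k) (y)_k (2x - y + n + 1)_k ∏_{k ≤ i < n} (x + 1 + i)^2`. Replacing each
`(x + 1 + i)^2` by `(x + 1 + i)^2 - t` gives a terminating Pfaff–Saalschütz sum with
`c, d = x + 1 ± √t`, whose value is `∏_{i < n} ((x - y + 1 + i)^2 - t)`. Both sides are
polynomials in `t`; their values at `t = 0` give the sum without harmonic numbers, and their
derivatives at `t = 0` (logarithmic derivatives of the products) give `H_n^{(2)}(x) - H_k^{(2)}(x)`
on the left and `H_n^{(2)}(x - y)` on the right.
-/

open Finset

noncomputable def gbinom (w : ℂ) (k : ℕ) : ℂ :=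
  (∏ i ∈ Finset.range k, (w - i)) / (Nat.factorial k)

noncomputable def genH (l : ℕ) (x : ℂ) (n : ℕ) : ℂ :=
  ∑ i ∈ Finset.range n, 1 / (x + (i + 1)) ^ l

noncomputable def poch (w : ℂ) (k : ℕ) : ℂ := ∏ i ∈ range k, (w + i)

lemma poch_succ_right (w : ℂ) (k : ℕ) : poch w (k + 1) = poch w k * (w + k) :=
  prod_range_succ _ _

lemma poch_succ_left (w : ℂ) (k : ℕ) : poch w (k + 1) = w * poch (w + 1) k := by
  rw [poch, prod_range_succ', poch, mul_comm]
  push_cast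
  simp only [add_zero, add_assoc, add_comm (1 : ℂ)]

lemma poch_ne_zero {w : ℂ} {k : ℕ} (h : ∀ i < k, w + i ≠ 0) : poch w k ≠ 0 :=
  prod_ne_zero_iff.mpr fun i hi => h i (mem_range.mp hi)

lemma poch_mul_prod_Ico (w : ℂ) {k n : ℕ} (hkn : k ≤ n) :
    poch w k * ∏ i ∈ Ico k n, (w + i) = poch w n :=
  prod_range_mul_prod_Ico _ hkn

lemma gbinom_add_self (w : ℂ) (k : ℕ) : gbinom (w + k) k = poch (w + 1) k / k.factorial := by
  rw [gbinom, poch, ← prod_range_reflect]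
  congr 1
  refine prod_congr rfl fun i hi => ?_
  rw [Nat.sub_sub, Nat.cast_sub (by have := mem_range.mp hi; omega)]
  push_cast
  ring

section Saalschutz

variable (n : ℕ) (a b c d : ℂ)

noncomputable def saalTerm (k : ℕ) : ℂ :=
  (-1) ^ k * n.choose k * poch a k * poch b k * ∏ i ∈ Ico k n, ((c + i) * (d + i))

noncomputable def saalCert : ℕ → ℂ
  | 0 => 0
  | j + 1 => (-1) ^ j * n.choose j * poch a (j + 1) * poch (b + 1) j * (b + n + 1) *
      ∏ i ∈ Ico j n, ((c + i) * (d + i))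

variable {n a b c d}

/-- The WZ recurrence in `n` for the Saalschütz summand, with certificate `saalCert`. -/
lemma saalTerm_succ (hb : b = c + d + n - 1 - a) {k : ℕ} (hk : k ≤ n + 1) :
    saalTerm (n + 1) a (b + 1) c d k = (c - a + n) * (d - a + n) * saalTerm n a b c d k +
      (saalCert n a b c d (k + 1) - saalCert n a b c d k) := by
  rcases k with _ | j
  · simp only [saalTerm, saalCert, poch, prod_Ico_succ_top (Nat.zero_le n), pow_zero,
      Nat.choose_zero_right, Nat.cast_one, range_zero, prod_empty, prod_range_one, Nat.cast_zero,
      add_zero, zero_add]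
    subst hb
    ring
  rcases Nat.lt_or_ge j n with hjn | hjn
  · set u : ℂ := (n.choose j : ℂ)
    set v : ℂ := (n.choose (j + 1) : ℂ)
    have hvu : v * (j + 1) = u * (n - j) := by
      have h := congrArg (Nat.cast (R := ℂ)) (Nat.choose_succ_right_eq n j)
      push_cast [Nat.cast_sub hjn.le] at h
      exact h
    have hscalar : (u + v) * ((b + 1 + j) * (c + n) * (d + n)) =
        v * (b * (c - a + n) * (d - a + n)) + v * ((a + j + 1) * (b + 1 + j) * (b + n + 1)) +
          u * ((b + n + 1) * (c + j) * (d + j)) := by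
      subst hb
      refine mul_left_cancel₀ (Nat.cast_add_one_ne_zero j) ?_
      linear_combination ((c + d + n - a + j) * (c + n) * (d + n) -
        (c + d + n - 1 - a) * (c - a + n) * (d - a + n) -
        (a + j + 1) * (c + d + n - a + j) * (c + d + n - a + n)) * hvu
    simp only [saalTerm, saalCert]
    rw [prod_Ico_succ_top (by omega : j + 1 ≤ n), prod_eq_prod_Ico_succ_bot (by omega : j < n),
      poch_succ_left b j, poch_succ_right a (j + 1), poch_succ_right (b + 1) j,
      Nat.choose_succ_succ, Nat.cast_add]
    push_cast
    linear_combination (-1 : ℂ) ^ (j + 1) * poch a (j + 1) * poch (b + 1) j *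
      (∏ i ∈ Ico (j + 1) n, ((c + i) * (d + i))) * hscalar
  · obtain rfl : j = n := by omega
    simp only [saalTerm, saalCert, Nat.choose_succ_self, Nat.choose_self, Ico_self, prod_empty,
      poch_succ_right (b + 1) j]
    push_cast
    ring

/-- The Pfaff–Saalschütz summation, in the polynomial form that needs no denominators. -/
theorem sum_saalTerm (n : ℕ) (a c d : ℂ) :
    ∑ k ∈ range (n + 1), saalTerm n a (c + d + n - 1 - a) c d k =
      ∏ i ∈ range n, ((c - a + i) * (d - a + i)) := by
  induction n with
  | zero => simp [saalTerm, poch]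
  | succ n ih =>
    set b := c + d + n - 1 - a
    have hb : c + d + ((n + 1 : ℕ) : ℂ) - 1 - a = b + 1 := by push_cast; ring
    have hrec (k) (hk : k ∈ range (n + 2)) := saalTerm_succ (rfl : b = _) (mem_range_succ_iff.mp hk)
    rw [hb, sum_congr rfl hrec, sum_add_distrib, ← mul_sum, sum_range_sub, sum_range_succ, ih,
      prod_range_succ]
    simp [saalTerm, saalCert, Nat.choose_succ_self]
    ring

end Saalschutz

open Polynomial in
/-- Differentiating a polynomial identity in `t` at `t = 0`. -/
theorem sum_mul_sum_prod_erase_eq_of_forall {R ι κ : Type*} [CommRing R] [IsDomain R]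
    [Infinite R] [DecidableEq κ] (K : Finset ι) (c : ι → R) (S : ι → Finset κ) (T : Finset κ)
    (a b : κ → R) (h : ∀ t, ∑ k ∈ K, c k * ∏ i ∈ S k, (a i - t) = ∏ i ∈ T, (b i - t)) :
    ∑ k ∈ K, c k * ∑ j ∈ S k, ∏ i ∈ (S k).erase j, a i = ∑ j ∈ T, ∏ i ∈ T.erase j, b i := by
  have hpoly : ∑ k ∈ K, C (c k) * ∏ i ∈ S k, (C (a i) - X) = ∏ i ∈ T, (C (b i) - X) :=
    Polynomial.funext fun t => by simpa [eval_finsetSum, eval_prod] using h t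
  have hderiv := congrArg (fun p => (derivative p).eval 0) hpoly
  simpa [derivative_prod_finset, eval_finsetSum, eval_prod, mul_sum] using hderiv

theorem sum_prod_erase_eq_prod_mul_sum_inv {ι K : Type*} [Field K] [DecidableEq ι]
    (s : Finset ι) (f : ι → K) (hf : ∀ i ∈ s, f i ≠ 0) :
    ∑ j ∈ s, ∏ i ∈ s.erase j, f i = (∏ i ∈ s, f i) * ∑ j ∈ s, (f j)⁻¹ := by
  rw [mul_sum]
  refine sum_congr rfl fun j hj => ?_
  rw [← mul_prod_erase s f hj, mul_comm (f j), mul_assoc, mul_inv_cancel₀ (hf j hj), mul_one]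

lemma genH_sub_genH (l : ℕ) (x : ℂ) {k n : ℕ} (hkn : k ≤ n) :
    genH l x n - genH l x k = ∑ i ∈ Ico k n, ((x + 1 + i) ^ l)⁻¹ := by
  rw [sum_Ico_eq_sub _ hkn, genH, genH]
  simp only [one_div, add_assoc, add_comm (1 : ℂ)]

lemma sum_prod_erase_sq_eq_mul_genH_sub (z : ℂ) {k n : ℕ} (hkn : k ≤ n)
    (hz : ∀ i < n, z + 1 + i ≠ 0) :
    ∑ j ∈ Ico k n, ∏ i ∈ (Ico k n).erase j, (z + 1 + i) ^ 2 =
      (∏ i ∈ Ico k n, (z + 1 + i) ^ 2) * (genH 2 z n - genH 2 z k) := by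
  rw [genH_sub_genH 2 z hkn]
  exact sum_prod_erase_eq_prod_mul_sum_inv _ _ fun i hi => pow_ne_zero 2 (hz i (mem_Ico.mp hi).2)

noncomputable def saalWeight (n : ℕ) (x y : ℂ) (k : ℕ) : ℂ :=
  (-1) ^ k * n.choose k * poch y k * poch (2 * x - y + n + 1) k

/-- Saalschütz with `c, d = x + 1 ± √t`, so that `(c + i) * (d + i) = (x + 1 + i) ^ 2 - t`. -/
lemma sum_mul_prod_sq_sub (n : ℕ) (x y t : ℂ) :
    ∑ k ∈ range (n + 1), saalWeight n x y k * ∏ i ∈ Ico k n, ((x + 1 + i) ^ 2 - t) =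
      ∏ i ∈ range n, ((x - y + 1 + i) ^ 2 - t) := by
  obtain ⟨ε, hε⟩ := IsAlgClosed.exists_pow_nat_eq t two_pos
  have h := sum_saalTerm n y (x + 1 + ε) (x + 1 - ε)
  have hb : x + 1 + ε + (x + 1 - ε) + n - 1 - y = 2 * x - y + n + 1 := by ring
  have hc (i : ℕ) : (x + 1 + ε + i) * (x + 1 - ε + i) = (x + 1 + i) ^ 2 - t := by
    rw [← hε]; ring
  have hca (i : ℕ) : (x + 1 + ε - y + i) * (x + 1 - ε - y + i) = (x - y + 1 + i) ^ 2 - t := by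
    rw [← hε]; ring
  simp only [saalTerm, hb, hc, hca] at h
  simpa only [saalWeight, mul_assoc] using h

lemma sum_mul_prod_sq_mul_genH (n : ℕ) (x y : ℂ) (hx : ∀ i < n, x + 1 + i ≠ 0)
    (hxy : ∀ i < n, x - y + 1 + i ≠ 0) :
    ∑ k ∈ range (n + 1), saalWeight n x y k * (∏ i ∈ Ico k n, (x + 1 + i) ^ 2) * genH 2 x k =
      (∏ i ∈ range n, (x - y + 1 + i) ^ 2) * (genH 2 x n - genH 2 (x - y) n) := by
  have hval := sum_mul_prod_sq_sub n x y 0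
  have hderiv := sum_mul_sum_prod_erase_eq_of_forall _ _ _ _ _ _ (sum_mul_prod_sq_sub n x y)
  simp only [sub_zero] at hval
  have hsplit : ∑ k ∈ range (n + 1), saalWeight n x y k *
        ((∏ i ∈ Ico k n, (x + 1 + i) ^ 2) * (genH 2 x n - genH 2 x k)) =
      (∑ k ∈ range (n + 1), saalWeight n x y k * ∏ i ∈ Ico k n, (x + 1 + i) ^ 2) * genH 2 x n -
        ∑ k ∈ range (n + 1),
          saalWeight n x y k * (∏ i ∈ Ico k n, (x + 1 + i) ^ 2) * genH 2 x k := by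
    rw [sum_mul, ← sum_sub_distrib]
    exact sum_congr rfl fun _ _ => by ring
  have hQ := sum_prod_erase_sq_eq_mul_genH_sub (x - y) (Nat.zero_le n) hxy
  have hH0 : genH 2 (x - y) 0 = 0 := sum_range_zero _
  simp only [← range_eq_Ico, hH0, sub_zero] at hQ
  rw [hQ, sum_congr rfl fun k hk => by
    rw [sum_prod_erase_sq_eq_mul_genH_sub x (mem_range_succ_iff.mp hk) hx]] at hderiv
  rw [hsplit, hval] at hderiv
  linear_combination -hderiv

lemma add_one_add_ne_zero {z : ℂ} {n : ℕ} (hz : ∀ k ∈ Icc 1 n, z + (k : ℂ) ≠ 0) {i : ℕ}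
    (hi : i < n) : z + 1 + i ≠ 0 := by
  have h := hz (i + 1) (mem_Icc.mpr ⟨by omega, hi⟩)
  push_cast at h
  rwa [add_right_comm, add_assoc]

lemma summand_eq_div_poch_sq {n k : ℕ} {x y : ℂ} (hkn : k ≤ n) (hx : ∀ i < n, x + 1 + i ≠ 0)
    (hyk : y + k ≠ 0) :
    (-1 : ℂ) ^ k * (n.choose k : ℂ) *
        (gbinom (2 * x - y + n + k) k * gbinom (y + k) k / (gbinom (x + k) k) ^ 2) *
        (y / (y + k)) * genH 2 x k =
      saalWeight n x y k * (∏ i ∈ Ico k n, (x + 1 + i) ^ 2) * genH 2 x k / poch (x + 1) n ^ 2 := by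
  have hxk : poch (x + 1) k ≠ 0 := poch_ne_zero fun i hi => hx i (by omega)
  have hIco : ∏ i ∈ Ico k n, (x + 1 + i) ≠ 0 :=
    prod_ne_zero_iff.mpr fun i hi => hx i (mem_Ico.mp hi).2
  have hfac := Nat.cast_ne_zero (R := ℂ) |>.mpr k.factorial_ne_zero
  have hy : y * poch (y + 1) k = poch y k * (y + k) :=
    (poch_succ_left y k).symm.trans (poch_succ_right y k)
  rw [gbinom_add_self, gbinom_add_self, gbinom_add_self, ← poch_mul_prod_Ico (x + 1) hkn,
    saalWeight, prod_pow]
  field_simp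
  linear_combination (n.choose k * poch (2 * x - y + n + 1) k * genH 2 x k) * hy

theorem stmt5_general (x y : ℂ) (n : ℕ)
    (h2 : ∀ k ≤ n, y + (k : ℂ) ≠ 0)
    (h3 : ∀ k ∈ Finset.Icc 1 n, x + (k : ℂ) ≠ 0)
    (h4 : ∀ k ∈ Finset.Icc 1 n, x - y + (k : ℂ) ≠ 0) :
    ∑ k ∈ Finset.range (n + 1), (-1 : ℂ) ^ k * (n.choose k : ℂ) *
        (gbinom (2 * x - y + n + k) k * gbinom (y + k) k / (gbinom (x + k) k) ^ 2) *
        (y / (y + k)) * genH 2 x k =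
      (gbinom (x - y + n) n) ^ 2 / (gbinom (x + n) n) ^ 2 *
        (genH 2 x n - genH 2 (x - y) n) := by
  have hx (i : ℕ) (hi : i < n) : x + 1 + i ≠ 0 := add_one_add_ne_zero h3 hi
  have hxy (i : ℕ) (hi : i < n) : x - y + 1 + i ≠ 0 := add_one_add_ne_zero h4 hi
  have hsummand (k : ℕ) (hk : k ∈ range (n + 1)) :=
    summand_eq_div_poch_sq (mem_range_succ_iff.mp hk) hx (h2 k (mem_range_succ_iff.mp hk))
  rw [sum_congr rfl hsummand, ← sum_div, sum_mul_prod_sq_mul_genH n x y hx hxy, prod_pow, ← poch,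
    gbinom_add_self, gbinom_add_self]
  have hpoch := poch_ne_zero hx
  have hfac := Nat.cast_ne_zero (R := ℂ) |>.mpr n.factorial_ne_zero
  field_simp

theorem stmt5 (x y : ℂ) (n : ℕ) (hn : 0 < n)
    (h1 : ∀ k ≤ n, gbinom (x + k) k ≠ 0)
    (h2 : ∀ k ≤ n, y + (k : ℂ) ≠ 0)
    (h3 : ∀ k ∈ Finset.Icc 1 n, x + (k : ℂ) ≠ 0)
    (h4 : ∀ k ∈ Finset.Icc 1 n, x - y + (k : ℂ) ≠ 0) :
    ∑ k ∈ Finset.range (n + 1), (-1 : ℂ) ^ k * (n.choose k : ℂ) *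
        (gbinom (2 * x - y + n + k) k * gbinom (y + k) k / (gbinom (x + k) k) ^ 2) *
        (y / (y + k)) * genH 2 x k =
      (gbinom (x - y + n) n) ^ 2 / (gbinom (x + n) n) ^ 2 *
        (genH 2 x n - genH 2 (x - y) n) :=
  stmt5_general x y n h2 h3 h4
end

section
/- For complex numbers $x,y$ and a positive integer $n$ (with no denominator vanishing), $\sum_{k=0}^n(-1)^k\binom{n}{k}\frac{\binom{y+k}{k}}{\binom{y-n+k}{k}}\,\frac{y}{y+k}\,H_k^{\langle2\rangle}(x)=\frac{(-1)^n}{n}\cdot\frac{\binom{x-y+n}{n}}{\binom{x+n}{n}\binom{y}{n}}\Big(H_n(x-y)-H_n(x)\Big)$. -/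
open Finset

noncomputable def pp (w : ℂ) (n : ℕ) : ℂ := ∏ i ∈ Finset.range n, (w + (i + 1))

lemma pp_succ (w : ℂ) (n : ℕ) : pp w (n + 1) = pp w n * (w + (n + 1)) := by
  simp [pp, Finset.prod_range_succ]

lemma gbinom_eq (w : ℂ) (k : ℕ) : gbinom (w + k) k = pp w k / k.factorial := by
  unfold gbinom pp
  congr 1
  rw [← Finset.prod_range_reflect (fun j => w + (j + 1)) k]
  apply Finset.prod_congr rfl
  intro i hi
  simp only [Finset.mem_range] at hi
  have h1 : ((k - 1 - i : ℕ) : ℂ) = (k : ℂ) - 1 - i := by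
    have : (k - 1 - i) + (i + 1) = k := by omega
    have := congrArg (fun m : ℕ => (m : ℂ)) this
    push_cast at this
    linear_combination this
  rw [h1]; ring

lemma pp_ne_zero {w : ℂ} {n : ℕ} (h : ∀ j ∈ Finset.Icc 1 n, w + (j : ℂ) ≠ 0) :
    pp w n ≠ 0 := by
  rw [pp, Finset.prod_ne_zero_iff]
  intro i hi
  simp only [Finset.mem_range] at hi
  have := h (i + 1) (by simp; omega)
  push_cast at this
  exact this

lemma pp_neg (n : ℕ) : pp (-(n + 1 : ℂ)) n = (-1) ^ n * n.factorial := by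
  unfold pp
  have : ∀ i ∈ Finset.range n, -(n + 1 : ℂ) + (i + 1) = -((((n - 1 - i : ℕ)) : ℂ) + 1) := by
    intro i hi
    simp only [Finset.mem_range] at hi
    have : (n - 1 - i) + (i + 1) = n := by omega
    have := congrArg (fun m : ℕ => (m : ℂ)) this
    push_cast at this
    linear_combination this
  rw [Finset.prod_congr rfl this, Finset.prod_range_reflect (fun j => -((j : ℂ) + 1)) n]
  have : ∀ j ∈ Finset.range n, -((j : ℂ) + 1) = (-1) * ((j : ℂ) + 1) := by intros; ring
  rw [Finset.prod_congr rfl this, Finset.prod_mul_distrib, Finset.prod_const, Finset.card_range]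
  congr 1
  have h := congrArg (fun m : ℕ => (m : ℂ)) (Finset.prod_range_add_one_eq_factorial n)
  push_cast at h
  exact h

noncomputable def AA (y : ℂ) (n k : ℕ) : ℂ :=
  pp (-(k : ℂ) - y) n / ((-1) ^ (k - 1) * ((k - 1).factorial : ℂ) * ((n - k).factorial : ℂ))

lemma key1 (A u c yy : ℂ) (hu : u ≠ 0) (hc : c ≠ 0) (hv : u + c ≠ 0) :
    A * (c - yy) / c / u = (u + c - yy) / (u + c) * (A / u) + yy / (u + c) * (A / (-c)) := by
  field_simp
  ring

lemma key2 (P X Q D w yy : ℂ) (hX : X ≠ 0) (hD : D ≠ 0) (hv : w + yy ≠ 0) :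
    w / (w + yy) * (P / X - 1) + yy / (w + yy) * (Q / D - 1) + Q * (-yy) / D / (w + yy)
      = P * w / (X * (w + yy)) - 1 := by
  field_simp
  ring

lemma natcast_sub_of_le {a b : ℕ} (h : b ≤ a) : ((a - b : ℕ) : ℂ) = (a : ℂ) - b := by
  have h2 : (a - b) + b = a := by omega
  have := congrArg (fun t : ℕ => (t : ℂ)) h2
  push_cast at this
  linear_combination this

lemma lemI (y : ℂ) : ∀ (n : ℕ) (x : ℂ), (∀ j ∈ Finset.Icc 1 n, x + (j : ℂ) ≠ 0) →
    ∑ k ∈ Finset.Icc 1 n, AA y n k / (x + k) = pp (x - y) n / pp x n - 1 := by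
  intro n
  induction n with
  | zero => intro x hx; simp [pp]
  | succ m IH =>
    intro x hx
    have hxm : ∀ j ∈ Finset.Icc 1 m, x + (j : ℂ) ≠ 0 := by
      intro j hj; simp only [Finset.mem_Icc] at hj; exact hx j (by simp; omega)
    have hxN : x + ((m : ℂ) + 1) ≠ 0 := by
      have := hx (m + 1) (by simp)
      push_cast at this; exact this
    have hx' : ∀ j ∈ Finset.Icc 1 m, -((m : ℂ) + 1) + (j : ℂ) ≠ 0 := by
      intro j hj; simp only [Finset.mem_Icc] at hj
      intro hc
      have hj2 : (j : ℂ) = ((m + 1 : ℕ) : ℂ) := by push_cast; linear_combination hc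
      have : j = m + 1 := Nat.cast_injective hj2
      omega
    have IH1 := IH x hxm
    have IH2 := IH (-((m : ℂ) + 1)) (by intro j hj; exact hx' j hj)
    rw [Finset.sum_Icc_succ_top (by omega : 1 ≤ m + 1)]
    have hterm : ∀ k ∈ Finset.Icc 1 m, AA y (m + 1) k / (x + k) =
        (x - y + ((m : ℂ) + 1)) / (x + ((m : ℂ) + 1)) * (AA y m k / (x + k)) +
        y / (x + ((m : ℂ) + 1)) * (AA y m k / (-((m : ℂ) + 1) + k)) := by
      intro k hk
      simp only [Finset.mem_Icc] at hk
      obtain ⟨hk1, hk2⟩ := hk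
      have hNk : ((m : ℂ) + 1 - k) ≠ 0 := by
        intro hc
        have hj2 : ((m + 1 : ℕ) : ℂ) = (k : ℂ) := by push_cast; linear_combination hc
        have : m + 1 = k := Nat.cast_injective hj2
        omega
      have hrec : AA y (m + 1) k = AA y m k * ((m : ℂ) + 1 - k - y) / ((m : ℂ) + 1 - k) := by
        unfold AA
        have hfac : ((m + 1 - k).factorial : ℂ) = ((m : ℂ) + 1 - k) * ((m - k).factorial : ℂ) := by
          have h1 : m + 1 - k = (m - k) + 1 := by omega
          rw [h1, Nat.factorial_succ, Nat.cast_mul]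
          congr 1
          have h3 := natcast_sub_of_le (show k ≤ m by omega)
          push_cast
          linear_combination h3
        have hpp' : pp (-(k : ℂ) - y) (m + 1) = pp (-(k : ℂ) - y) m * ((m : ℂ) + 1 - k - y) := by
          rw [pp_succ]; ring_nf
        rw [hpp', hfac]
        generalize (m : ℂ) + 1 - (k : ℂ) = c
        ring
      have hxk : x + (k : ℂ) ≠ 0 := hx k (by simp; omega)
      have h := key1 (AA y m k) (x + (k : ℂ)) ((m : ℂ) + 1 - k) y hxk hNk
        (by intro hc; apply hxN; linear_combination hc)
      rw [hrec]
      rw [show x - y + ((m : ℂ) + 1) = (x + (k : ℂ)) + ((m : ℂ) + 1 - k) - y from by ring,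
        show x + ((m : ℂ) + 1) = (x + (k : ℂ)) + ((m : ℂ) + 1 - k) from by ring,
        show -((m : ℂ) + 1) + (k : ℂ) = -(((m : ℂ) + 1 - k)) from by ring]
      exact h
    rw [Finset.sum_congr rfl hterm, Finset.sum_add_distrib, ← Finset.mul_sum, ← Finset.mul_sum,
      IH1, IH2]
    have hlast : AA y (m + 1) (m + 1)
        = pp (-((m : ℂ) + 1) - y) m * (-y) / ((-1) ^ m * (m.factorial : ℂ)) := by
      unfold AA
      simp only [Nat.add_sub_cancel, Nat.sub_self, Nat.factorial_zero, Nat.cast_one, mul_one]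
      have h1 : pp (-((m + 1 : ℕ) : ℂ) - y) (m + 1) = pp (-((m : ℂ) + 1) - y) m * (-y) := by
        have h0 : (-((m + 1 : ℕ) : ℂ) - y) = (-((m : ℂ) + 1) - y) := by push_cast; ring
        rw [h0, pp_succ]
        congr 1
        ring
      rw [h1]
    rw [hlast]
    have hppneg : pp (-((m : ℂ) + 1)) m = (-1) ^ m * (m.factorial : ℂ) := pp_neg m
    rw [hppneg]
    have hN : ((m + 1 : ℕ) : ℂ) = (m : ℂ) + 1 := by push_cast; ring
    rw [hN, pp_succ (x - y) m, pp_succ x m]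
    have hppx : pp x m ≠ 0 := pp_ne_zero hxm
    have hD : ((-1 : ℂ)) ^ m * (m.factorial : ℂ) ≠ 0 := by
      apply mul_ne_zero
      · exact pow_ne_zero _ (by norm_num)
      · exact_mod_cast Nat.factorial_ne_zero _
    have h := key2 (pp (x - y) m) (pp x m) (pp (-((m : ℂ) + 1) - y) m)
      ((-1) ^ m * (m.factorial : ℂ)) (x + ((m : ℂ) + 1) - y) y hppx hD
      (by intro hc; apply hxN; linear_combination hc)
    rw [show x - y + ((m : ℂ) + 1) = x + ((m : ℂ) + 1) - y from by ring]
    rw [show x + ((m : ℂ) + 1) = (x + ((m : ℂ) + 1) - y) + y from by ring] 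
    convert h using 2 <;> ring

lemma hasDerivAt_pp (a : ℂ) (n : ℕ) (x : ℂ) (h : ∀ j ∈ Finset.Icc 1 n, x + a + (j : ℂ) ≠ 0) :
    HasDerivAt (fun t : ℂ => pp (t + a) n)
      (pp (x + a) n * genH 1 (x + a) n) x := by
  have hf : ∀ i ∈ Finset.range n, HasDerivAt (fun t : ℂ => t + a + ((i : ℂ) + 1)) 1 x := by
    intro i _
    simpa using ((hasDerivAt_id x).add_const a).add_const ((i : ℂ) + 1)
  have H := HasDerivAt.fun_finsetProd hf
  have heq : (fun t : ℂ => ∏ i ∈ Finset.range n, (t + a + ((i : ℂ) + 1)))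
      = fun t : ℂ => pp (t + a) n := by
    funext t; simp [pp]
  rw [heq] at H
  refine H.congr_deriv ?_
  symm
  rw [genH, Finset.mul_sum, Finset.sum_congr rfl]
  intro i hi
  simp only [Finset.mem_range] at hi
  have hne : x + a + ((i : ℂ) + 1) ≠ 0 := by
    have := h (i + 1) (by simp; omega)
    push_cast at this
    exact this
  have hme : (x + a + ((i : ℂ) + 1)) * ∏ j ∈ (Finset.range n).erase i, (x + a + ((j : ℂ) + 1))
      = pp (x + a) n := by
    rw [Finset.mul_prod_erase (Finset.range n) (fun j => x + a + ((j : ℂ) + 1))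
      (Finset.mem_range.mpr hi)]
    simp [pp]
  rw [smul_eq_mul, mul_one, pow_one]
  field_simp
  rw [← hme]

lemma lemII (y : ℂ) (n : ℕ) (x : ℂ) (hx : ∀ j ∈ Finset.Icc 1 n, x + (j : ℂ) ≠ 0)
    (hxy : ∀ j ∈ Finset.Icc 1 n, x - y + (j : ℂ) ≠ 0) :
    ∑ k ∈ Finset.Icc 1 n, -(AA y n k / (x + k) ^ 2)
      = pp (x - y) n / pp x n * (genH 1 (x - y) n - genH 1 x n) := by
  have hppx : pp x n ≠ 0 := pp_ne_zero hx
  -- derivative of the sum side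
  have hf : HasDerivAt (fun t : ℂ => ∑ k ∈ Finset.Icc 1 n, AA y n k / (t + k))
      (∑ k ∈ Finset.Icc 1 n, -(AA y n k / (x + k) ^ 2)) x := by
    apply HasDerivAt.fun_sum
    intro k hk
    have hxk : x + (k : ℂ) ≠ 0 := hx k hk
    have h1 : HasDerivAt (fun t : ℂ => t + (k : ℂ)) 1 x := by
      simpa using (hasDerivAt_id x).add_const ((k : ℂ))
    have := (hasDerivAt_const x (AA y n k)).div h1 hxk
    refine this.congr_deriv ?_
    ring
  -- derivative of the product side
  have hu : HasDerivAt (fun t : ℂ => pp (t + -y) n) (pp (x + -y) n * genH 1 (x + -y) n) x :=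
    hasDerivAt_pp (-y) n x (by
      intro j hj
      rw [show x + -y + (j : ℂ) = x - y + j from by ring]
      exact hxy j hj)
  have hv : HasDerivAt (fun t : ℂ => pp (t + 0) n) (pp (x + 0) n * genH 1 (x + 0) n) x :=
    hasDerivAt_pp 0 n x (by
      intro j hj
      rw [show x + 0 + (j : ℂ) = x + j from by ring]
      exact hx j hj)
  simp only [add_zero] at hv
  have hg : HasDerivAt (fun t : ℂ => pp (t + -y) n / pp (t + 0) n - 1)
      ((pp (x + -y) n * genH 1 (x + -y) n * pp x n
        - pp (x + -y) n * (pp x n * genH 1 x n)) / (pp x n) ^ 2) x := by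
    have := (hu.div hv hppx).sub_const 1
    simpa using this
  -- f and g agree near x
  have hev : ∀ᶠ t in nhds x, ∀ j ∈ Finset.Icc 1 n, t + (j : ℂ) ≠ 0 := by
    rw [Filter.eventually_all_finset]
    intro j hj
    exact ContinuousAt.eventually_ne (by fun_prop) (hx j hj)
  have heq : (fun t : ℂ => ∑ k ∈ Finset.Icc 1 n, AA y n k / (t + k))
      =ᶠ[nhds x] (fun t : ℂ => pp (t + -y) n / pp (t + 0) n - 1) := by
    filter_upwards [hev] with t ht
    have := lemI y n t ht
    simp only [add_zero] at *
    rw [show t + -y = t - y from by ring]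
    exact this
  have hf2 := hg.congr_of_eventuallyEq heq
  have hDeq := hf.unique hf2
  rw [hDeq]
  rw [show x + -y = x - y from by ring]
  field_simp

lemma pp_split (y : ℂ) (n k : ℕ) (hk : k < n) :
    pp (-((k : ℂ) + 1) - y) n * pp (y - n) k = (-1) ^ n * pp y k * pp (y - n) n := by
  have hn : k + (n - k) = n := by omega
  have hsplit : pp (y - n) n
      = pp (y - n) k * ∏ i ∈ Finset.range (n - k), (y - (n : ℂ) + ((k + i : ℕ) + 1)) := by
    have h0 : pp (y - (n : ℂ)) n
        = ∏ j ∈ Finset.range (k + (n - k)), (y - (n : ℂ) + ((j : ℂ) + 1)) := by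
      rw [hn]; rfl
    rw [h0, Finset.prod_range_add (fun j => y - (n : ℂ) + ((j : ℂ) + 1)) k (n - k)]
    rfl
  -- the reflected/shifted product
  have hstep1 : ∀ j ∈ Finset.range n, -((k : ℂ) + 1) - y + ((j : ℂ) + 1)
      = (-1) * (y + (k : ℂ) - j) := by
    intro j _; ring
  have hstep2 : ∀ j ∈ Finset.range n, y + (k : ℂ) - j
      = y + (k : ℂ) - (n : ℂ) + 1 + ((n - 1 - j : ℕ) : ℂ) := by
    intro j hj
    simp only [Finset.mem_range] at hj
    rw [natcast_sub_of_le (by omega : j ≤ n - 1), natcast_sub_of_le (by omega : 1 ≤ n)]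
    ring
  have hrefl : (∏ j ∈ Finset.range n, (y + (k : ℂ) - j))
      = ∏ j ∈ Finset.range n, (y + (k : ℂ) - (n : ℂ) + 1 + (j : ℂ)) := by
    rw [Finset.prod_congr rfl hstep2,
      Finset.prod_range_reflect (fun j => y + (k : ℂ) - (n : ℂ) + 1 + (j : ℂ)) n]
  have hsplit2 : (∏ j ∈ Finset.range n, (y + (k : ℂ) - (n : ℂ) + 1 + (j : ℂ)))
      = (∏ j ∈ Finset.range (n - k), (y + (k : ℂ) - (n : ℂ) + 1 + (j : ℂ)))
        * ∏ j ∈ Finset.range k, (y + (k : ℂ) - (n : ℂ) + 1 + ((n - k + j : ℕ) : ℂ)) := by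
    have h0 : (∏ j ∈ Finset.range n, (y + (k : ℂ) - (n : ℂ) + 1 + (j : ℂ)))
        = ∏ j ∈ Finset.range ((n - k) + k), (y + (k : ℂ) - (n : ℂ) + 1 + (j : ℂ)) := by
      have : (n - k) + k = n := by omega
      rw [this]
    rw [h0, Finset.prod_range_add (fun j => y + (k : ℂ) - (n : ℂ) + 1 + (j : ℂ)) (n - k) k]
  have hA : (∏ j ∈ Finset.range (n - k), (y + (k : ℂ) - (n : ℂ) + 1 + (j : ℂ)))
      = ∏ i ∈ Finset.range (n - k), (y - (n : ℂ) + ((k + i : ℕ) + 1)) := by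
    apply Finset.prod_congr rfl
    intro i _
    push_cast
    ring
  have hB : (∏ j ∈ Finset.range k, (y + (k : ℂ) - (n : ℂ) + 1 + ((n - k + j : ℕ) : ℂ)))
      = pp y k := by
    apply Finset.prod_congr rfl
    intro j _
    rw [Nat.cast_add, natcast_sub_of_le (by omega : k ≤ n)]
    ring
  have hmain : pp (-((k : ℂ) + 1) - y) n
      = (-1) ^ n * ((∏ i ∈ Finset.range (n - k), (y - (n : ℂ) + ((k + i : ℕ) + 1))) * pp y k) := by
    rw [pp, Finset.prod_congr rfl hstep1, Finset.prod_mul_distrib, Finset.prod_const,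
      Finset.card_range, hrefl, hsplit2, hA, hB]
  rw [hmain, hsplit]
  ring

noncomputable def dd (y : ℂ) (n : ℕ) : ℕ → ℂ
  | 0 => 0
  | (k + 1) => (-1) ^ (k + 1) * ((n - 1).choose k : ℂ) * pp y k / pp (y - n) k

lemma abel (c h : ℕ → ℂ) (m : ℕ) :
    ∑ k ∈ Finset.range (m + 1), (c k - c (k + 1)) * h k
      = c 0 * h 0 - c (m + 1) * h m + ∑ k ∈ Finset.range m, c (k + 1) * (h (k + 1) - h k) := by
  induction m with
  | zero => simp; ring
  | succ m ih =>
    rw [Finset.sum_range_succ, ih, Finset.sum_range_succ]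
    ring

lemma key3 (P Q f u v a b Cn y s : ℂ) (hQ : Q ≠ 0) (hf : f ≠ 0) (hu : u ≠ 0) (hv : v ≠ 0)
    (hS : y * Cn = a * v + b * u) :
    s * Cn * ((P * u / f) / (Q * v / f)) * (y / u)
      = s * a * P / Q + s * b * (P * u) / (Q * v) := by
  have h1 : (P * u / f) / (Q * v / f) * (y / u) = P * y / (Q * v) := by
    field_simp
  calc s * Cn * ((P * u / f) / (Q * v / f)) * (y / u)
      = s * Cn * ((P * u / f) / (Q * v / f) * (y / u)) := by ring
    _ = s * Cn * (P * y / (Q * v)) := by rw [h1]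
    _ = s * (P * (y * Cn)) / (Q * v) := by ring
    _ = s * (P * (a * v + b * u)) / (Q * v) := by rw [hS]
    _ = s * a * P / Q + s * b * (P * u) / (Q * v) := by
        field_simp

lemma Fstep (y : ℂ) (n : ℕ) (hn : 0 < n) (k : ℕ) (hk : k ≤ n)
    (hyk : y + (k : ℂ) ≠ 0)
    (hpp : ∀ j ≤ n, pp (y - n) j ≠ 0) :
    (-1 : ℂ) ^ k * (n.choose k : ℂ) * ((pp y k / k.factorial) / (pp (y - n) k / k.factorial))
        * (y / (y + k)) = dd y n k - dd y n (k + 1) := by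
  match k with
  | 0 =>
    simp only [dd, pp, Finset.range_zero, Finset.prod_empty, Nat.choose_zero_right,
      Nat.factorial_zero, Nat.choose_self, pow_zero, Nat.cast_one]
    simp only [Nat.cast_zero, add_zero] at hyk
    field_simp
    norm_num [hyk]
  | (j + 1) =>
    obtain ⟨m, rfl⟩ : ∃ m, n = m + 1 := ⟨n - 1, by omega⟩
    simp only [dd, Nat.add_sub_cancel]
    have hfk : (((j + 1).factorial : ℕ) : ℂ) ≠ 0 := by exact_mod_cast Nat.factorial_ne_zero _
    have hppj : pp (y - ((m + 1 : ℕ) : ℂ)) j ≠ 0 := hpp j (by omega)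
    have hppj1 : pp (y - ((m + 1 : ℕ) : ℂ)) (j + 1) ≠ 0 := hpp (j + 1) hk
    have hfac : y - ((m + 1 : ℕ) : ℂ) + ((j : ℂ) + 1) ≠ 0 := by
      intro hc
      apply hppj1
      rw [pp_succ]
      push_cast at hc ⊢
      rw [show y - ((m : ℂ) + 1) + ((j : ℂ) + 1) = 0 from hc]
      ring
    push_cast at hyk
    have hc1 : ((m.choose j : ℕ) : ℂ) + ((m.choose (j + 1) : ℕ) : ℂ)
        = (((m + 1).choose (j + 1) : ℕ) : ℂ) := by
      exact_mod_cast congrArg (fun t : ℕ => (t : ℂ)) (Nat.choose_succ_succ m j).symm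
    have hc3 : ((m.choose (j + 1) : ℕ) : ℂ) * ((j : ℂ) + 1)
        = ((m.choose j : ℕ) : ℂ) * ((m : ℂ) - j) := by
      have h1 := congrArg (fun t : ℕ => (t : ℂ)) (Nat.choose_succ_right_eq m j)
      push_cast at h1
      rw [natcast_sub_of_le (by omega : j ≤ m)] at h1
      linear_combination h1
    have hS : y * (((m + 1).choose (j + 1) : ℕ) : ℂ)
        = ((m.choose j : ℕ) : ℂ) * (y - ((m : ℂ) + 1) + ((j : ℂ) + 1))
          + ((m.choose (j + 1) : ℕ) : ℂ) * (y + ((j : ℂ) + 1)) := by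
      linear_combination (-y) * hc1 - hc3
    have H := key3 (pp y j) (pp (y - ((m + 1 : ℕ) : ℂ)) j) (((j + 1).factorial : ℕ) : ℂ)
      (y + ((j : ℂ) + 1)) (y - ((m + 1 : ℕ) : ℂ) + ((j : ℂ) + 1))
      ((m.choose j : ℕ) : ℂ) ((m.choose (j + 1) : ℕ) : ℂ) (((m + 1).choose (j + 1) : ℕ) : ℂ)
      y ((-1 : ℂ) ^ (j + 1)) hppj hfk hyk hfac
      (by push_cast at hS ⊢; linear_combination hS)
    rw [pp_succ y j, pp_succ (y - ((m + 1 : ℕ) : ℂ)) j, pow_succ (-1 : ℂ) (j + 1)]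
    push_cast at H ⊢
    linear_combination H

lemma negsq (n : ℕ) : ((-1 : ℂ)) ^ (n * 2) = 1 := by rw [mul_comm, pow_mul]; norm_num

lemma d_eq (y : ℂ) (n : ℕ) (hn : 0 < n) (k : ℕ) (hk : k < n)
    (hppk : pp (y - n) k ≠ 0) (hppn : pp (y - n) n ≠ 0) :
    dd y n (k + 1) = -((-1 : ℂ) ^ n * (n.factorial : ℂ) / ((n : ℂ) * pp (y - n) n))
      * AA y n (k + 1) := by
  simp only [dd, AA, Nat.add_sub_cancel]
  have hsplit := pp_split y n k hk
  have hchoose : ((n - 1).choose k : ℂ) * (k.factorial : ℂ) * ((n - 1 - k).factorial : ℂ)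
      = ((n - 1).factorial : ℂ) := by
    have h0 := Nat.choose_mul_factorial_mul_factorial (show k ≤ n - 1 by omega)
    exact_mod_cast congrArg (fun t : ℕ => (t : ℂ)) h0
  have hnfac : (n.factorial : ℂ) = (n : ℂ) * ((n - 1).factorial : ℂ) := by
    have h0 : n * (n - 1).factorial = n.factorial := Nat.mul_factorial_pred (by omega)
    exact_mod_cast congrArg (fun t : ℕ => (t : ℂ)) h0.symm
  have hn0 : (n : ℂ) ≠ 0 := Nat.cast_ne_zero.mpr (by omega)
  have hsub : n - (k + 1) = n - 1 - k := by omega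
  rw [hsub]
  have hcast : (-((k + 1 : ℕ) : ℂ) - y) = (-((k : ℂ) + 1) - y) := by push_cast; ring
  rw [hcast]
  have hfk : (k.factorial : ℂ) ≠ 0 := by exact_mod_cast Nat.factorial_ne_zero _
  have hfnk : (((n - 1 - k).factorial : ℕ) : ℂ) ≠ 0 := by exact_mod_cast Nat.factorial_ne_zero _
  have hPP : pp (-((k : ℂ) + 1) - y) n
      = (-1) ^ n * pp y k * pp (y - n) n / pp (y - n) k := by
    rw [eq_div_iff hppk]
    linear_combination hsplit
  rw [hPP, hnfac]
  rw [← hchoose]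
  have hppk' : pp (-(n : ℂ) + y) k ≠ 0 := by
    rw [show -(n : ℂ) + y = y - n from by ring]; exact hppk
  have hppn' : pp (-(n : ℂ) + y) n ≠ 0 := by
    rw [show -(n : ℂ) + y = y - n from by ring]; exact hppn
  field_simp
  ring_nf
  simp [negsq]

theorem stmt9 (x y : ℂ) (n : ℕ) (hn : 0 < n)
    (h1 : ∀ k ≤ n, gbinom (y - n + k) k ≠ 0)
    (h2 : ∀ k ≤ n, y + (k : ℂ) ≠ 0)
    (h3 : ∀ k ∈ Finset.Icc 1 n, x + (k : ℂ) ≠ 0)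
    (h4 : ∀ k ∈ Finset.Icc 1 n, x - y + (k : ℂ) ≠ 0)
    (h5 : gbinom (x + n) n ≠ 0) (h6 : gbinom y n ≠ 0) :
    ∑ k ∈ Finset.range (n + 1), (-1 : ℂ) ^ k * (n.choose k : ℂ) *
        (gbinom (y + k) k / gbinom (y - n + k) k) * (y / (y + k)) * genH 2 x k =
      (-1 : ℂ) ^ n / n * (gbinom (x - y + n) n / (gbinom (x + n) n * gbinom y n)) *
        (genH 1 (x - y) n - genH 1 x n) := by
  have hfac : ∀ m : ℕ, ((m.factorial : ℕ) : ℂ) ≠ 0 := fun m => by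
    exact_mod_cast Nat.factorial_ne_zero m
  have h1' : ∀ k ≤ n, pp (y - (n : ℂ)) k ≠ 0 := by
    intro k hk
    have hg := h1 k hk
    rw [gbinom_eq (y - (n : ℂ)) k] at hg
    intro hc
    apply hg
    rw [hc, zero_div]
  have hppx : pp x n ≠ 0 := by
    have hg := h5
    rw [gbinom_eq x n] at hg
    intro hc; apply hg; rw [hc, zero_div]
  have hppyn : pp (y - (n : ℂ)) n ≠ 0 := h1' n le_rfl
  have hn0 : (n : ℂ) ≠ 0 := Nat.cast_ne_zero.mpr (by omega)
  -- Step 1: telescoping form of the summand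
  have hsum1 : ∑ k ∈ Finset.range (n + 1), (-1 : ℂ) ^ k * (n.choose k : ℂ) *
        (gbinom (y + k) k / gbinom (y - n + k) k) * (y / (y + k)) * genH 2 x k
      = ∑ k ∈ Finset.range (n + 1), (dd y n k - dd y n (k + 1)) * genH 2 x k := by
    apply Finset.sum_congr rfl
    intro k hk
    simp only [Finset.mem_range] at hk
    have hk' : k ≤ n := by omega
    rw [gbinom_eq y k, gbinom_eq (y - (n : ℂ)) k]
    rw [Fstep y n hn k hk' (h2 k hk') h1']
  rw [hsum1, abel (dd y n) (genH 2 x) n]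
  have hd0 : dd y n 0 = 0 := rfl
  have hdn1 : dd y n (n + 1) = 0 := by
    simp [dd, Nat.choose_eq_zero_of_lt (show n - 1 < n by omega)]
  rw [hd0, hdn1]
  simp only [zero_mul, sub_zero, zero_sub, neg_zero, zero_add]
  -- Step 2: rewrite each remaining term via d_eq and the genH difference
  have hsum2 : ∑ k ∈ Finset.range n, dd y n (k + 1) * (genH 2 x (k + 1) - genH 2 x k)
      = ((-1 : ℂ) ^ n * (n.factorial : ℂ) / ((n : ℂ) * pp (y - (n : ℂ)) n))
        * ∑ k ∈ Finset.Icc 1 n, -(AA y n k / (x + k) ^ 2) := by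
    rw [Finset.mul_sum]
    rw [show Finset.Icc 1 n = Finset.Ico 1 (n + 1) from by rw [Finset.Ico_add_one_right_eq_Icc],
      Finset.sum_Ico_eq_sum_range]
    simp only [Nat.add_sub_cancel]
    apply Finset.sum_congr rfl
    intro k hk
    simp only [Finset.mem_range] at hk
    rw [Nat.add_comm 1 k]
    have hdiff : genH 2 x (k + 1) - genH 2 x k = 1 / (x + ((k : ℂ) + 1)) ^ 2 := by
      simp [genH, Finset.sum_range_succ]
    rw [hdiff, d_eq y n hn k hk (h1' k (by omega)) hppyn]
    push_cast
    ring
  rw [hsum2, lemII y n x h3 h4]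
  -- Step 3: rewrite the RHS gbinom's
  rw [gbinom_eq (x - y) n, gbinom_eq x n]
  have h6' : gbinom y n = pp (y - (n : ℂ)) n / (n.factorial : ℂ) := by
    conv_lhs => rw [show y = (y - (n : ℂ)) + (n : ℂ) from by ring]
    exact gbinom_eq _ _
  rw [h6']
  have hq : (pp (x - y) n / (n.factorial : ℂ))
        / ((pp x n / (n.factorial : ℂ)) * (pp (y - (n : ℂ)) n / (n.factorial : ℂ)))
      = pp (x - y) n * (n.factorial : ℂ) / (pp x n * pp (y - (n : ℂ)) n) := by
    field_simp
  rw [hq]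
  ring
end
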